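/- The symplectic group Sp_4(ℚ), consisting of 4×4 rational matrices A satisfying Aᵀ·Ω·A = Ω for the standard skew-symmetric form Ω = [[0, I_2], [−I_2, 0]], has infinitely many z-classes. -/

import Mathlib

open scoped Matrix

/-- Two elements are z-equivalent if their centralizers are conjugate. -/
def zEquiv {G : Type*} [Group G] (g₁ g₂ : G) : Prop :=
  ∃ t : G, (Subgroup.centralizer {g₁}).map (MulAut.conj t).toMonoidHom =
    Subgroup.centralizer {g₂}

/-- The set of z-classes of a group. -/
def zClasses (G : Type*) [Group G] : Set (Set G) :=
  Set.range fun g => {h | zEquiv g h}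

/-- The subgroup of `GL_n(k)` preserving the bilinear form given by `J`:
matrices `A` with `Aᵀ * J * A = J`. -/
def formGroup {n : Type*} [Fintype n] [DecidableEq n] {k : Type*} [CommRing k]
    (J : Matrix n n k) : Subgroup (Matrix n n k)ˣ where
  carrier := {A | (A : Matrix n n k)ᵀ * J * (A : Matrix n n k) = J}
  one_mem' := by simp
  mul_mem' := by
    intro a b ha hb
    simp only [Set.mem_setOf_eq] at *
    rw [Units.val_mul, Matrix.transpose_mul]
    calc (b : Matrix n n k)ᵀ * (a : Matrix n n k)ᵀ * J * ((a : Matrix n n k) * b)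
        = (b : Matrix n n k)ᵀ * ((a : Matrix n n k)ᵀ * J * a) * b := by noncomm_ring
      _ = (b : Matrix n n k)ᵀ * J * b := by rw [ha]
      _ = J := hb
  inv_mem' := by
    intro a ha
    simp only [Set.mem_setOf_eq] at *
    calc ((a⁻¹ : (Matrix n n k)ˣ) : Matrix n n k)ᵀ * J * ((a⁻¹ : (Matrix n n k)ˣ) : Matrix n n k)
        = ((a⁻¹ : (Matrix n n k)ˣ) : Matrix n n k)ᵀ * ((a : Matrix n n k)ᵀ * J * a) *
            ((a⁻¹ : (Matrix n n k)ˣ) : Matrix n n k) := by rw [ha]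
      _ = ((a : Matrix n n k) * ((a⁻¹ : (Matrix n n k)ˣ) : Matrix n n k))ᵀ * J *
            ((a : Matrix n n k) * ((a⁻¹ : (Matrix n n k)ˣ) : Matrix n n k)) := by
          rw [Matrix.transpose_mul]; noncomm_ring
      _ = J := by rw [Units.mul_inv]; simp

/-!
For a non-square `r`, the centralizer of the companion matrix `C_r = !![0, r; 1, 0]` of `X² - r`
is a copy of the field `K(√r)`, so it has no zero divisors. Put `A_r = diag(C_r, C_{r⁻¹}) ∈ Sp₄`.
If `A_p` and `A_q` have conjugate centralizers, some conjugate `Z` of `A_p` commutes with `A_q`.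
As `C_q²` and `C_{q⁻¹}²` are distinct scalars, `Z` is block lower triangular with top-left block `X`
commuting with `C_q`. Since `Z`, like `A_p`, is annihilated by `(x² - p)(x² - p⁻¹)`, so is `X`;
hence `X² = p` or `X² = p⁻¹` in `K(√q)`, which forces `p` or `pq` to be a square.
So the `A_p`, `p` prime, lie in pairwise distinct z-classes.
-/

open Matrix

section zEquiv

variable {G : Type*} [Group G]

lemma zEquiv_refl (g : G) : zEquiv g g :=
  ⟨1, by ext; simp [Subgroup.mem_map]⟩

lemma zEquiv.exists_commute_conj {g h : G} (hgh : zEquiv g h) :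
    ∃ t : G, Commute (t * g * t⁻¹) h := by
  obtain ⟨t, ht⟩ := hgh
  have hg : g ∈ Subgroup.centralizer {g} := Subgroup.mem_centralizer_singleton_iff.2 rfl
  exact ⟨t, Subgroup.mem_centralizer_singleton_iff.1 (ht ▸ Subgroup.mem_map_of_mem _ hg)⟩

lemma infinite_zClasses_of_pairwise_not_zEquiv {ι : Type*} [Infinite ι] (g : ι → G)
    (hg : Pairwise fun i j => ¬zEquiv (g i) (g j)) : (zClasses G).Infinite := by
  refine Set.infinite_of_injective_forall_mem (f := fun i => {h | zEquiv (g i) h})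
    (fun i j hij => ?_) (fun i => ⟨g i, rfl⟩)
  by_contra hne
  exact hg hne ((Set.ext_iff.1 hij (g j)).2 (zEquiv_refl (g j)))

end zEquiv

lemma isUnit_of_transpose_mul_mul_eq {R n : Type*} [CommRing R] [Fintype n] [DecidableEq n]
    {J A : Matrix n n R} (hJ : IsUnit J) (hA : Aᵀ * J * A = J) : IsUnit A := by
  rw [isUnit_iff_isUnit_det] at hJ ⊢
  have h : A.det * A.det * J.det = 1 * J.det := by
    simpa [det_mul, det_transpose, mul_comm, mul_left_comm] using congrArg det hA
  exact .of_mul_eq_one _ (hJ.mul_right_cancel h)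

lemma isUnit_fromBlocks_zero_one_neg_one_zero {R n : Type*} [CommRing R] [Fintype n]
    [DecidableEq n] : IsUnit (fromBlocks 0 1 (-1) 0 : Matrix (n ⊕ n) (n ⊕ n) R) :=
  .of_mul_eq_one (-fromBlocks 0 1 (-1) 0) <| by
    simp [fromBlocks_multiply, fromBlocks_neg, fromBlocks_one]

section Companion

variable {K : Type*} [Field K]

lemma eq_zero_of_mul_eq_mul_of_mul_self_eq_smul {m n : Type*} [Fintype m] [Fintype n]
    [DecidableEq m] [DecidableEq n] {C : Matrix m m K} {D : Matrix n n K} {s t : K}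
    (hC : C * C = s • 1) (hD : D * D = t • 1) (hst : s ≠ t) {Y : Matrix m n K}
    (hY : C * Y = Y * D) : Y = 0 := by
  have h : s • Y = t • Y := calc
    s • Y = C * C * Y := by rw [hC, smul_mul, Matrix.one_mul]
    _ = Y * D * D := by rw [Matrix.mul_assoc, hY, ← Matrix.mul_assoc, hY]
    _ = t • Y := by rw [Matrix.mul_assoc, hD, Matrix.mul_smul, Matrix.mul_one]
  rwa [← sub_eq_zero, ← sub_smul, smul_eq_zero, or_iff_right (sub_ne_zero.2 hst)] at h

lemma SemiconjBy.mul_self_sub_smul_mul_eq_zero {R : Type*} [Ring R] [Algebra K R] {T : Rˣ}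
    {A Z : R} (h : SemiconjBy (T : R) A Z) {s t : K}
    (hA : (A * A - s • 1) * (A * A - t • 1) = 0) : (Z * Z - s • 1) * (Z * Z - t • 1) = 0 := by
  have hscalar : ∀ u : K, SemiconjBy (T : R) (u • 1) (u • 1) :=
    fun u => (Commute.one_right _).smul_right u
  have hP := ((h.mul_right h).sub_right (hscalar s)).mul_right
    ((h.mul_right h).sub_right (hscalar t))
  rw [SemiconjBy, hA, mul_zero] at hP
  exact T.mul_left_eq_zero.1 hP.symm

def companion2 (r : K) : Matrix (Fin 2) (Fin 2) K := !![0, r; 1, 0]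

lemma companion2_mul_self (r : K) : companion2 r * companion2 r = r • 1 := by
  ext i j; fin_cases i <;> fin_cases j <;> simp [companion2]

lemma companion2_transpose_mul_companion2_inv {r : K} (hr : r ≠ 0) :
    (companion2 r)ᵀ * companion2 r⁻¹ = 1 := by
  ext i j; fin_cases i <;> fin_cases j <;> simp [companion2, mul_apply, Fin.sum_univ_two, hr]

lemma eq_of_commute_companion2 {r : K} {X : Matrix (Fin 2) (Fin 2) K}
    (hX : Commute X (companion2 r)) : X = !![X 0 0, r * X 1 0; X 1 0, X 0 0] := by
  have h01 : X 0 1 = r * X 1 0 := by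
    simpa [companion2, mul_apply, Fin.sum_univ_two] using congrFun (congrFun hX.eq 0) 0
  have h11 : X 1 1 = X 0 0 := by
    simpa [companion2, mul_apply, Fin.sum_univ_two] using congrFun (congrFun hX.eq 1) 0
  ext i j; fin_cases i <;> fin_cases j <;> simp [h01, h11]

lemma eq_zero_of_commute_companion2_of_det_eq_zero {r : K} (hr : ¬IsSquare r)
    {X : Matrix (Fin 2) (Fin 2) K} (hX : Commute X (companion2 r)) (hdet : X.det = 0) :
    X = 0 := by
  rw [eq_of_commute_companion2 hX, det_fin_two_of] at hdet
  have hb : X 1 0 = 0 := by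
    by_contra hb
    exact hr ⟨X 0 0 / X 1 0, by field_simp; linear_combination -hdet⟩
  have ha : X 0 0 = 0 := by simpa [hb] using hdet
  rw [eq_of_commute_companion2 hX, ha, hb]
  ext i j; fin_cases i <;> fin_cases j <;> simp

lemma eq_zero_or_eq_zero_of_commute_companion2 {r : K} (hr : ¬IsSquare r)
    {X Y : Matrix (Fin 2) (Fin 2) K} (hX : Commute X (companion2 r))
    (hY : Commute Y (companion2 r)) (hXY : X * Y = 0) : X = 0 ∨ Y = 0 := by
  have hdet : X.det * Y.det = 0 := by rw [← det_mul, hXY, det_zero]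
  exact (mul_eq_zero.1 hdet).imp (eq_zero_of_commute_companion2_of_det_eq_zero hr hX)
    (eq_zero_of_commute_companion2_of_det_eq_zero hr hY)

lemma isSquare_or_of_commute_companion2_of_mul_self_eq_smul (h2 : (2 : K) ≠ 0) {r s : K}
    {X : Matrix (Fin 2) (Fin 2) K} (hX : Commute X (companion2 r)) (hs : X * X = s • 1) :
    IsSquare s ∨ IsSquare (r * s) := by
  rw [eq_of_commute_companion2 hX] at hs
  have hoff : 2 * (X 0 0 * X 1 0) = 0 := by
    linear_combination (by simpa [mul_apply, Fin.sum_univ_two] using congrFun (congrFun hs 1) 0 :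
      X 1 0 * X 0 0 + X 0 0 * X 1 0 = 0)
  have hdiag : X 0 0 * X 0 0 + r * X 1 0 * X 1 0 = s := by
    simpa [mul_apply, Fin.sum_univ_two] using congrFun (congrFun hs 0) 0
  rcases mul_eq_zero.1 ((mul_eq_zero.1 hoff).resolve_left h2) with ha | hb
  · exact .inr ⟨r * X 1 0, by rw [← hdiag, ha]; ring⟩
  · exact .inl ⟨X 0 0, by rw [← hdiag, hb]; ring⟩

def blockCompanion (r : K) : Matrix (Fin 2 ⊕ Fin 2) (Fin 2 ⊕ Fin 2) K :=
  fromBlocks (companion2 r) 0 0 (companion2 r⁻¹)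

lemma blockCompanion_transpose_mul_mul {r : K} (hr : r ≠ 0) :
    (blockCompanion r)ᵀ * fromBlocks 0 1 (-1) 0 * blockCompanion r = fromBlocks 0 1 (-1) 0 := by
  have h := companion2_transpose_mul_companion2_inv hr
  have h' : (companion2 r⁻¹)ᵀ * companion2 r = 1 := by
    rw [← transpose_transpose (companion2 r), ← transpose_mul, h, transpose_one]
  simp [blockCompanion, fromBlocks_transpose, fromBlocks_multiply, h, h']

lemma blockCompanion_annihilated (r : K) :
    (blockCompanion r * blockCompanion r - r • 1) *
      (blockCompanion r * blockCompanion r - r⁻¹ • 1) = 0 := by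
  simp [blockCompanion, fromBlocks_multiply, companion2_mul_self, ← fromBlocks_one,
    fromBlocks_smul, sub_eq_add_neg, fromBlocks_neg, fromBlocks_add]

theorem not_commute_of_semiconjBy_blockCompanion (h2 : (2 : K) ≠ 0) {p q : K}
    (hp : ¬IsSquare p) (hpq : ¬IsSquare (p * q)) (hq : ¬IsSquare q) (hqq : q ≠ q⁻¹)
    {T : (Matrix (Fin 2 ⊕ Fin 2) (Fin 2 ⊕ Fin 2) K)ˣ} {Z : Matrix (Fin 2 ⊕ Fin 2) (Fin 2 ⊕ Fin 2) K}
    (hT : SemiconjBy (T : Matrix (Fin 2 ⊕ Fin 2) (Fin 2 ⊕ Fin 2) K) (blockCompanion p) Z) :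
    ¬Commute Z (blockCompanion q) := by
  intro hZ
  obtain ⟨X, Y, U, V, rfl⟩ : ∃ X Y U V, Z = fromBlocks X Y U V :=
    ⟨_, _, _, _, (fromBlocks_toBlocks Z).symm⟩
  obtain ⟨hX, hY, -, -⟩ : X * companion2 q = companion2 q * X ∧
      Y * companion2 q⁻¹ = companion2 q * Y ∧ _ ∧ _ := by
    simpa [blockCompanion, fromBlocks_multiply] using hZ.eq
  obtain rfl : Y = 0 := eq_zero_of_mul_eq_mul_of_mul_self_eq_smul (companion2_mul_self q)
    (companion2_mul_self q⁻¹) hqq hY.symm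
  have hXquartic : (X * X - p • 1) * (X * X - p⁻¹ • 1) = 0 := by
    have h := congrArg toBlocks₁₁ (hT.mul_self_sub_smul_mul_eq_zero (blockCompanion_annihilated p))
    simp only [fromBlocks_multiply, ← fromBlocks_one, fromBlocks_smul, sub_eq_add_neg,
      fromBlocks_neg, fromBlocks_add, toBlocks_fromBlocks₁₁, Matrix.zero_mul, Matrix.mul_zero,
      smul_zero, neg_zero, add_zero] at h
    rw [sub_eq_add_neg, sub_eq_add_neg]
    exact h
  have hXC : Commute X (companion2 q) := hX
  have hfactor : ∀ s : K, Commute (X * X - s • 1) (companion2 q) :=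
    fun s => (hXC.mul_left hXC).sub_left ((Commute.one_left _).smul_left s)
  have hp0 : p ≠ 0 := by rintro rfl; exact hp .zero
  rcases eq_zero_or_eq_zero_of_commute_companion2 hq (hfactor p) (hfactor p⁻¹) hXquartic
    with h | h
  all_goals
    rcases isSquare_or_of_commute_companion2_of_mul_self_eq_smul h2 hXC (sub_eq_zero.1 h)
      with hsq | hsq
  · exact hp hsq
  · exact hpq (mul_comm q p ▸ hsq)
  · exact hp (isSquare_inv.1 hsq)
  · have hpq_eq : p * q = q * p⁻¹ * (p * p) := by field_simp
    exact hpq (hpq_eq ▸ hsq.mul (.mul_self p))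

noncomputable def spBlockCompanion {r : K} (hr : r ≠ 0) :
    formGroup (fromBlocks 0 1 (-1) 0 : Matrix (Fin 2 ⊕ Fin 2) (Fin 2 ⊕ Fin 2) K) :=
  ⟨(isUnit_of_transpose_mul_mul_eq isUnit_fromBlocks_zero_one_neg_one_zero
    (blockCompanion_transpose_mul_mul hr)).unit, blockCompanion_transpose_mul_mul hr⟩

theorem not_zEquiv_spBlockCompanion (h2 : (2 : K) ≠ 0) {p q : K} (hp : ¬IsSquare p)
    (hpq : ¬IsSquare (p * q)) (hq : ¬IsSquare q) (hqq : q ≠ q⁻¹) (hp0 : p ≠ 0) (hq0 : q ≠ 0) :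
    ¬zEquiv (spBlockCompanion hp0) (spBlockCompanion hq0) := by
  intro h
  obtain ⟨t, ht⟩ := h.exists_commute_conj
  let φ := (Units.coeHom _).comp
    (formGroup (fromBlocks 0 1 (-1) 0 : Matrix (Fin 2 ⊕ Fin 2) (Fin 2 ⊕ Fin 2) K)).subtype
  exact not_commute_of_semiconjBy_blockCompanion h2 hp hpq hq hqq (T := t)
    ((SemiconjBy.conj_mk t (spBlockCompanion hp0)).map φ) (ht.map φ)

end Companion

lemma Nat.Prime.not_isSquare_mul {p q : ℕ} (hp : p.Prime) (hq : q.Prime) (hpq : p ≠ q) :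
    ¬IsSquare (p * q) := by
  rintro ⟨r, hr⟩
  have hsf : Squarefree (p * q) := Nat.squarefree_mul_iff.2
    ⟨(Nat.coprime_primes hp hq).2 hpq, hp.prime.squarefree, hq.prime.squarefree⟩
  obtain rfl : r = 1 := Nat.isUnit_iff.1 (hsf r (hr ▸ dvd_rfl))
  exact hp.ne_one (Nat.eq_one_of_mul_eq_one_right hr)

/-- the symplectic group `Sp₄(ℚ)` has infinitely many z-classes. -/
theorem infinite_zClasses_Sp4_rat :
    (zClasses ↥(formGroup
      (Matrix.fromBlocks 0 1 (-1) 0 :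
        Matrix (Fin 2 ⊕ Fin 2) (Fin 2 ⊕ Fin 2) ℚ))).Infinite := by
  have hne : ∀ p : Nat.Primes, ((p : ℕ) : ℚ) ≠ 0 := fun p => Nat.cast_ne_zero.2 p.2.ne_zero
  have hsq : ∀ p : Nat.Primes, ¬IsSquare ((p : ℕ) : ℚ) :=
    fun p => Rat.isSquare_natCast_iff.not.2 p.2.prime.not_isSquare
  refine infinite_zClasses_of_pairwise_not_zEquiv (fun p : Nat.Primes => spBlockCompanion (hne p))
    fun p q hpq => not_zEquiv_spBlockCompanion two_ne_zero (hsq p) ?_ (hsq q) ?_ (hne p) (hne q)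
  · rw [← Nat.cast_mul, Rat.isSquare_natCast_iff]
    exact p.2.not_isSquare_mul q.2 (Subtype.coe_injective.ne hpq)
  · have hq1 : (1 : ℚ) < (q : ℕ) := by exact_mod_cast q.2.one_lt
    exact (inv_lt_one_of_one_lt₀ hq1 |>.trans hq1).ne'
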